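/- Let k ≥ 1 and let a_1, …, a_k : ℝ → ℝ be smooth functions. Then Σ_{j=1}^{k} (−1)^{j−1} · ( Σ_{i=j}^{k} (−1)^i·binom(i, j)·a_i^{(i−j)} )^{(j−1)} = − Σ_{i=1}^{k} (−1)^{i−1}·a_i^{(i−1)}, where the superscript (m) denotes the m-th iterated derivative. (This is the relation P₁ ∘ C = −P₁ from the multiplication table of the symmetry algebra of D^k_{0,1}(S¹): applying the map P₁(A) = (Σ_{i≥1} (−1)^{i−1} a_i^{(i−1)}) ∘ d to the conjugate operator C(A), whose coefficients are c_j = Σ_{i=j}^{k} (−1)^i binom(i,j) a_i^{(i−j)}, yields −P₁(A).) -/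

import Mathlib

open Finset
open scoped ContDiff

private lemma itd_itd (m n : ℕ) (f : ℝ → ℝ) :
    iteratedDeriv m (iteratedDeriv n f) = iteratedDeriv (m + n) f := by
  induction m with
  | zero => simp
  | succ m ih =>
    rw [iteratedDeriv_succ, ih, show m + 1 + n = (m + n) + 1 by omega, iteratedDeriv_succ]

private lemma itd_sum {ι : Type*} (s : Finset ι) (f : ι → ℝ → ℝ)
    (hf : ∀ i ∈ s, ContDiff ℝ ∞ (f i)) (n : ℕ) (x : ℝ) :
    iteratedDeriv n (fun y => ∑ i ∈ s, f i y) x = ∑ i ∈ s, iteratedDeriv n (f i) x := by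
  simp only [iteratedDeriv]
  rw [iteratedFDeriv_sum (fun i hi => (hf i hi).of_le (by exact_mod_cast le_top))]
  simp

private lemma itd_const_mul (c : ℝ) (f : ℝ → ℝ) (hf : ContDiff ℝ ∞ f) (n : ℕ) (x : ℝ) :
    iteratedDeriv n (fun y => c * f y) x = c * iteratedDeriv n f x := by
  simp only [← iteratedDerivWithin_univ]
  exact iteratedDerivWithin_const_mul (Set.mem_univ x) uniqueDiffOn_univ c
    ((hf.contDiffWithinAt (s := Set.univ) (x := x)).of_le (by exact_mod_cast le_top))

private lemma alt_sum (i : ℕ) (hi : 1 ≤ i) :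
    ∑ j ∈ Finset.Icc 1 i, (-1:ℝ)^(j-1) * (i.choose j : ℝ) = 1 := by
  have h0 : ∑ m ∈ range (i+1), (-1:ℝ)^m * (i.choose m : ℝ) = 0 := by
    have h := Int.alternating_sum_range_choose_of_ne (Nat.one_le_iff_ne_zero.mp hi)
    have := congrArg (Int.cast : ℤ → ℝ) h
    push_cast at this
    exact this
  rw [Finset.sum_range_succ' (fun m => (-1:ℝ)^m * (i.choose m : ℝ))] at h0
  simp only [pow_zero, Nat.choose_zero_right, Nat.cast_one, one_mul] at h0
  have h1 : ∑ j ∈ range i, (-1:ℝ)^(j+1) * (i.choose (j+1) : ℝ) = -1 := by linarith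
  have h2 : ∑ j ∈ Finset.Icc 1 i, (-1:ℝ)^(j-1) * (i.choose j : ℝ)
      = ∑ j ∈ range i, (-1:ℝ)^j * (i.choose (j+1) : ℝ) := by
    rw [show Finset.Icc 1 i = Finset.Ico 1 (i+1) by rfl, Finset.sum_Ico_eq_sum_range]
    simp only [Nat.add_sub_cancel]
    refine Finset.sum_congr rfl fun j _ => by
      rw [show 1 + j - 1 = j by omega, show 1 + j = j + 1 by omega]
  rw [h2]
  have h3 : ∀ j ∈ range i, (-1:ℝ)^j * (i.choose (j+1) : ℝ)
      = -((-1:ℝ)^(j+1) * (i.choose (j+1) : ℝ)) := by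
    intro j _; rw [pow_succ]; ring
  rw [Finset.sum_congr rfl h3, Finset.sum_neg_distrib, h1]
  norm_num

/-- The relation `P₁ ∘ C = −P₁`: applying the map
`P₁(A) = (Σ_{i≥1} (−1)^{i−1} a_i^{(i−1)}) ∘ d` to the conjugate operator `C(A)`, whose
coefficients are `c_j = Σ_{i=j}^k (−1)^i binom(i,j) a_i^{(i−j)}`, yields `−P₁(A)`. -/
theorem P1_conjugation (k : ℕ) (hk : 1 ≤ k) (a : ℕ → ℝ → ℝ)
    (ha : ∀ i, ContDiff ℝ (⊤ : ℕ∞) (a i)) :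
    (fun x => ∑ j ∈ Finset.Icc 1 k, (-1:ℝ)^(j-1) *
        iteratedDeriv (j-1)
          (fun y => ∑ i ∈ Finset.Icc j k,
            (-1:ℝ)^i * ((i.choose j : ℕ) : ℝ) * iteratedDeriv (i - j) (a i) y) x)
      = fun x => -∑ i ∈ Finset.Icc 1 k, (-1:ℝ)^(i-1) * iteratedDeriv (i-1) (a i) x := by
  funext x
  -- smoothness of iterated derivatives
  have hsm : ∀ i n : ℕ, ContDiff ℝ ∞ (iteratedDeriv n (a i)) := by
    intro i n
    rw [iteratedDeriv_eq_iterate]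
    exact ((ha i).of_le (by simp)).iterate_deriv n
  -- Step 1: push iteratedDeriv through the inner sum and constants
  have step1 : ∀ j ∈ Finset.Icc 1 k,
      (-1:ℝ)^(j-1) * iteratedDeriv (j-1)
          (fun y => ∑ i ∈ Finset.Icc j k,
            (-1:ℝ)^i * ((i.choose j : ℕ) : ℝ) * iteratedDeriv (i - j) (a i) y) x
      = ∑ i ∈ Finset.Icc j k,
          (-1:ℝ)^(j-1) * ((-1:ℝ)^i * (i.choose j : ℝ)) * iteratedDeriv (i-1) (a i) x := by
    intro j hj
    simp only [Finset.mem_Icc] at hj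
    rw [itd_sum _ _ (fun i _ => contDiff_const.mul (hsm i (i-j)))]
    rw [Finset.mul_sum]
    refine Finset.sum_congr rfl fun i hi => ?_
    simp only [Finset.mem_Icc] at hi
    rw [itd_const_mul _ _ (hsm i (i-j)), itd_itd (j-1) (i-j) (a i),
      show j - 1 + (i - j) = i - 1 by omega]
    ring
  rw [Finset.sum_congr rfl step1]
  -- Step 2: swap the order of summation
  set F : ℕ → ℕ → ℝ := fun i j =>
    (-1:ℝ)^(j-1) * ((-1:ℝ)^i * (i.choose j : ℝ)) * iteratedDeriv (i-1) (a i) x with hF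
  have step2 : ∑ j ∈ Finset.Icc 1 k, ∑ i ∈ Finset.Icc j k, F i j
      = ∑ i ∈ Finset.Icc 1 k, ∑ j ∈ Finset.Icc 1 i, F i j := by
    have e1 : ∀ j ∈ Finset.Icc 1 k, ∑ i ∈ Finset.Icc j k, F i j
        = ∑ i ∈ Finset.Icc 1 k, if j ≤ i then F i j else 0 := by
      intro j hj
      simp only [Finset.mem_Icc] at hj
      rw [← Finset.sum_subset (Finset.Icc_subset_Icc_left hj.1)
          (fun i hi hni => by
            simp only [Finset.mem_Icc] at hi hni
            rw [if_neg (by omega)])]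
      exact Finset.sum_congr rfl fun i hi => by
        simp only [Finset.mem_Icc] at hi; rw [if_pos hi.1]
    rw [Finset.sum_congr rfl e1, Finset.sum_comm]
    refine Finset.sum_congr rfl fun i hi => ?_
    simp only [Finset.mem_Icc] at hi
    rw [← Finset.sum_subset (Finset.Icc_subset_Icc_right hi.2)
        (fun j hj hnj => by
          simp only [Finset.mem_Icc] at hj hnj
          rw [if_neg (by omega)])]
    exact Finset.sum_congr rfl fun j hj => by
      simp only [Finset.mem_Icc] at hj; rw [if_pos hj.2]
  rw [step2]
  -- Step 3: evaluate inner binomial sum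
  rw [← Finset.sum_neg_distrib]
  refine Finset.sum_congr rfl fun i hi => ?_
  simp only [Finset.mem_Icc] at hi
  have key : ∑ j ∈ Finset.Icc 1 i, F i j
      = ((-1:ℝ)^i * ∑ j ∈ Finset.Icc 1 i, (-1:ℝ)^(j-1) * (i.choose j : ℝ))
        * iteratedDeriv (i-1) (a i) x := by
    rw [Finset.mul_sum, Finset.sum_mul]
    exact Finset.sum_congr rfl fun j _ => by rw [hF]; ring
  rw [key, alt_sum i hi.1, mul_one]
  have hpow : (-1:ℝ)^i = -(-1:ℝ)^(i-1) := by
    conv_lhs => rw [show i = (i-1)+1 by omega]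
    rw [pow_succ]; ring
  rw [hpow]; ring
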